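/- arXiv:1301.1781 — 6 statements merged into one kernel-verified Lean document; each statement's English description precedes it below -/
import Mathlib

section
/- Let B be a finite-dimensional commutative ℝ-algebra with unit and let J ∈ B be a nonzero element contained in every nonzero ideal of B (i.e., (J) is the minimal nonzero ideal, the socle, of B). Let L₁, L₂ : B → ℝ be ℝ-linear maps with L₁(J) > 0 and L₂(J) > 0. Then the symmetric bilinear forms ⟨a,b⟩₁ = L₁(a·b) and ⟨a,b⟩₂ = L₂(a·b) on B are equivalent: there exists an ℝ-linear automorphism σ of B with L₂(σ(a)·σ(b)) = L₁(a·b) for all a, b ∈ B. In particular the signature sgn(B,J) of the form ⟨a,b⟩ = L(a·b) does not depend on the choice of the linear map L with L(J) > 0. -/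
/-!
Since every nonzero element divides `J`, the Artinian ring `B` is local, its maximal ideal
annihilates `J`, and `L₁` induces a nondegenerate pairing; hence `L₂ = L₁ (c * ·)` for a unit `c`.
The residue field is `ℝ` or `ℂ`, and `c * J` depends only on the residue `c̄` of `c`; since
`L₂ J = L₁ (c * J)` and `L₁ J` are both positive, `c̄` is not a negative real, hence a square.
Hensel's lemma lifts this to `c = d ^ 2`, and `σ = (d⁻¹ * ·)` is the equivalence.
-/

open IsLocalRing Polynomial

section Socle

variable {R : Type*} [CommRing R] {J : R}

theorem dvd_of_forall_ne_bot_mem (hsoc : ∀ I : Ideal R, I ≠ ⊥ → J ∈ I) {a : R} (ha : a ≠ 0) :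
    a ∣ J :=
  Ideal.mem_span_singleton.mp (hsoc _ (by simpa [Ideal.span_singleton_eq_bot] using ha))

theorem mul_eq_zero_of_forall_ne_bot_mem [IsArtinianRing R]
    (hsoc : ∀ I : Ideal R, I ≠ ⊥ → J ∈ I) {a : R} (ha : ¬IsUnit a) : a * J = 0 := by
  obtain ⟨x, hx, hx0⟩ : ∃ x, x * a = 0 ∧ x ≠ 0 := by
    by_contra! h
    exact ha (IsArtinianRing.isUnit_of_mem_nonZeroDivisors (mem_nonZeroDivisors_iff_right.mpr h))
  obtain ⟨t, rfl⟩ := dvd_of_forall_ne_bot_mem hsoc hx0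
  rw [← mul_assoc, mul_comm a x, hx, zero_mul]

theorem isLocalRing_of_forall_ne_bot_mem [IsArtinianRing R] (hJ : J ≠ 0)
    (hsoc : ∀ I : Ideal R, I ≠ ⊥ → J ∈ I) : IsLocalRing R := by
  have : Nontrivial R := ⟨⟨J, 0, hJ⟩⟩
  refine .of_isUnit_or_isUnit_one_sub_self fun a => ?_
  by_contra! h
  apply hJ
  calc J = a * J + (1 - a) * J := by ring
    _ = 0 := by
      rw [mul_eq_zero_of_forall_ne_bot_mem hsoc h.1, mul_eq_zero_of_forall_ne_bot_mem hsoc h.2,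
        add_zero]

theorem exists_apply_mul_eq_of_forall_ne_bot_mem {K : Type*} [Field K] [Algebra K R]
    [FiniteDimensional K R] (hsoc : ∀ I : Ideal R, I ≠ ⊥ → J ∈ I) {L : R →ₗ[K] K}
    (hL : L J ≠ 0) (L' : R →ₗ[K] K) : ∃ c : R, ∀ x, L (c * x) = L' x := by
  have hinj : Function.Injective ((LinearMap.mul K R).compr₂ L) := by
    refine (injective_iff_map_eq_zero _).mpr fun a ha => ?_
    by_contra ha0
    obtain ⟨t, rfl⟩ := dvd_of_forall_ne_bot_mem hsoc ha0
    exact hL (LinearMap.congr_fun ha t)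
  obtain ⟨c, hc⟩ := (LinearMap.injective_iff_surjective_of_finrank_eq_finrank
    Subspace.dual_finrank_eq.symm).mp hinj L'
  exact ⟨c, LinearMap.congr_fun hc⟩

end Socle

theorem Real.isSquare_or_eq_algebraMap_neg {F : Type*} [Field F] [Algebra ℝ F]
    [Algebra.IsAlgebraic ℝ F] (x : F) : IsSquare x ∨ ∃ r : ℝ, r < 0 ∧ algebraMap ℝ F r = x := by
  rcases Real.nonempty_algEquiv_or F with ⟨⟨e⟩⟩ | ⟨⟨e⟩⟩
  · rcases le_or_gt 0 (e x) with h | h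
    · exact .inl ⟨e.symm √(e x), e.injective (by simp [Real.mul_self_sqrt h])⟩
    · exact .inr ⟨e x, h, e.injective (by simp)⟩
  · obtain ⟨z, hz⟩ := IsAlgClosed.exists_eq_mul_self (e x)
    exact .inl ⟨e.symm z, e.injective (by simpa using hz)⟩

theorem IsLocalRing.isSquare_of_isSquare_residue {R : Type*} [CommRing R] [IsLocalRing R]
    [HenselianRing R (maximalIdeal R)] (h2 : IsUnit (2 : R)) {c : R} (hc : IsUnit c)
    (h : IsSquare (residue R c)) : IsSquare c := by
  obtain ⟨y', hy'⟩ := h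
  obtain ⟨y, rfl⟩ := residue_surjective y'
  have hy : y * y - c ∈ maximalIdeal R := by
    rw [← residue_eq_zero_iff, map_sub, map_mul, hy', sub_self]
  have h2y : IsUnit (residue R (2 * y)) := by
    rw [isUnit_iff_ne_zero, map_mul]
    refine mul_ne_zero (h2.map _).ne_zero fun hy0 => (hc.map (residue R)).ne_zero ?_
    rw [hy', hy0, zero_mul]
  have hder : eval y (derivative (X ^ 2 - C c)) = 2 * y := by
    rw [derivative_sub, derivative_X_sq, derivative_C, sub_zero, eval_mul, eval_C, eval_X]
  obtain ⟨d, hd, -⟩ := HenselianRing.is_henselian (X ^ 2 - C c) (monic_X_pow_sub_C c two_ne_zero)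
    y (by rwa [eval_sub, eval_pow, eval_X, eval_C, sq]) (by rw [hder]; exact h2y)
  exact ⟨d, by simpa [sq, sub_eq_zero, eq_comm] using hd⟩

theorem isSquare_residue_of_forall_ne_bot_mem {R : Type*} [CommRing R] [Algebra ℝ R]
    [FiniteDimensional ℝ R] [IsLocalRing R] {J : R} (hsoc : ∀ I : Ideal R, I ≠ ⊥ → J ∈ I)
    {L : R →ₗ[ℝ] ℝ} (hJ : 0 < L J) {c : R} (hcJ : 0 < L (c * J)) : IsSquare (residue R c) := by
  have : IsArtinianRing R := .of_finite ℝ R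
  refine (Real.isSquare_or_eq_algebraMap_neg (residue R c)).resolve_right ?_
  rintro ⟨r, hr, hrc⟩
  have hcr : ¬IsUnit (c - algebraMap ℝ R r) := by
    rw [← mem_nonunits_iff, ← mem_maximalIdeal, ← residue_eq_zero_iff, map_sub, ← hrc, sub_eq_zero]
    rfl
  have hc : c * J = r • J := by
    rw [Algebra.smul_def, ← sub_eq_zero, ← sub_mul]
    exact mul_eq_zero_of_forall_ne_bot_mem hsoc hcr
  rw [hc, map_smul, smul_eq_mul] at hcJ
  nlinarith

/-- Let `B` be a finite-dimensional commutative `ℝ`-algebra and `J ≠ 0` an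
element contained in every nonzero ideal (so `(J)` is the socle of `B`).  If `L₁, L₂ : B → ℝ`
are `ℝ`-linear with `L₁ J > 0` and `L₂ J > 0`, then the symmetric bilinear forms
`⟨a, b⟩ᵢ = Lᵢ (a * b)` are equivalent; in particular the signature `sgn (B, J)` does not
depend on the choice of `L` with `L J > 0`. -/
theorem elk_form_equivalence
    {B : Type*} [CommRing B] [Algebra ℝ B] [FiniteDimensional ℝ B]
    (J : B) (hJ : J ≠ 0) (hsoc : ∀ I : Ideal B, I ≠ ⊥ → J ∈ I)
    (L₁ L₂ : B →ₗ[ℝ] ℝ) (h₁ : 0 < L₁ J) (h₂ : 0 < L₂ J) :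
    ∃ σ : B ≃ₗ[ℝ] B, ∀ a b : B, L₂ (σ a * σ b) = L₁ (a * b) := by
  have : IsArtinianRing B := .of_finite ℝ B
  have : IsLocalRing B := isLocalRing_of_forall_ne_bot_mem hJ hsoc
  obtain ⟨c, hc⟩ := exists_apply_mul_eq_of_forall_ne_bot_mem hsoc h₁.ne' L₂
  have hcJ : 0 < L₁ (c * J) := by rwa [hc]
  have hcu : IsUnit c := by
    by_contra h
    rw [mul_eq_zero_of_forall_ne_bot_mem hsoc h, map_zero] at hcJ
    exact hcJ.false
  have h2 : IsUnit (2 : B) := by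
    simpa only [map_ofNat] using (IsUnit.mk0 (2 : ℝ) two_ne_zero).map (algebraMap ℝ B)
  obtain ⟨d, rfl⟩ := isSquare_of_isSquare_residue h2 hcu
    (isSquare_residue_of_forall_ne_bot_mem hsoc h₁ hcJ)
  obtain ⟨u, rfl⟩ := isUnit_of_mul_isUnit_left hcu
  refine ⟨DistribMulAction.toLinearEquiv ℝ B u⁻¹, fun a b => ?_⟩
  rw [← hc]
  congr 1
  simp only [DistribMulAction.toLinearEquiv_apply, Units.smul_def, smul_eq_mul]
  linear_combination (↑u * ↑u⁻¹ + 1) * a * b * u.mul_inv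
end

section
/- Let B be a finite-dimensional commutative ℝ-algebra with unit and let J ∈ B be a nonzero element contained in every nonzero ideal of B (i.e., (J) is the minimal nonzero ideal, the socle, of B). Let L : B → ℝ be an ℝ-linear map with L(J) ≠ 0, and let h ∈ B. Then the radical of the symmetric bilinear form T(a,b) = L(h·a·b) on B equals the annihilator Ann(h) = {g ∈ B : g·h = 0}; that is, for a ∈ B one has L(h·a·b) = 0 for all b ∈ B if and only if a·h = 0. Consequently T induces a well-defined nondegenerate symmetric bilinear form ⟨[a],[b]⟩ = L(h·a·b) on the quotient algebra B/Ann(h). -/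
theorem exists_mul_eq_of_forall_ne_bot_mem {B : Type*} [CommSemiring B] {J x : B}
    (hsoc : ∀ I : Ideal B, I ≠ ⊥ → J ∈ I) (hx : x ≠ 0) : ∃ c, c * x = J :=
  Ideal.mem_span_singleton'.mp (hsoc _ (by simpa using hx))

theorem eq_zero_of_forall_apply_mul_eq_zero {B M : Type*} [CommSemiring B] [Zero M]
    {J : B} (hsoc : ∀ I : Ideal B, I ≠ ⊥ → J ∈ I) (f : B → M) (hf : f J ≠ 0) {x : B}
    (hx : ∀ b, f (x * b) = 0) : x = 0 := by
  by_contra hx0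
  obtain ⟨c, hc⟩ := exists_mul_eq_of_forall_ne_bot_mem hsoc hx0
  rw [← hc, mul_comm] at hf
  exact hf (hx c)

theorem radical_of_relative_form_eq_annihilator_general
    {B : Type*} [CommRing B] [Algebra ℝ B]
    (J : B) (hsoc : ∀ I : Ideal B, I ≠ ⊥ → J ∈ I)
    (L : B →ₗ[ℝ] ℝ) (hL : L J ≠ 0) (h : B) :
    ∀ a : B, (∀ b : B, L (h * a * b) = 0) ↔ a * h = 0 := by
  intro a
  simp only [mul_comm h a]
  constructor
  · exact eq_zero_of_forall_apply_mul_eq_zero hsoc L hL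
  · intro hah b
    rw [hah, zero_mul, map_zero]

/-- Let `B` be a finite-dimensional commutative `ℝ`-algebra and `J ≠ 0` an
element contained in every nonzero ideal (so `(J)` is the socle of `B`).  For any `ℝ`-linear
`L : B → ℝ` with `L J ≠ 0` and any `h ∈ B`, the radical of the symmetric bilinear form
`T (a, b) = L (h * a * b)` equals the annihilator `Ann h = {g : B | g * h = 0}`:
`L (h * a * b) = 0` for all `b` if and only if `a * h = 0`.  (Consequently `T` induces a
well-defined nondegenerate symmetric bilinear form on `B ⧸ Ann h`.) -/
theorem radical_of_relative_form_eq_annihilator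
    {B : Type*} [CommRing B] [Algebra ℝ B] [FiniteDimensional ℝ B]
    (J : B) (hJ : J ≠ 0) (hsoc : ∀ I : Ideal B, I ≠ ⊥ → J ∈ I)
    (L : B →ₗ[ℝ] ℝ) (hL : L J ≠ 0) (h : B) :
    ∀ a : B, (∀ b : B, L (h * a * b) = 0) ↔ a * h = 0 :=
  radical_of_relative_form_eq_annihilator_general J hsoc L hL h
end

section
/- Let B be a nonzero finite-dimensional commutative local ℝ-algebra with maximal ideal m, and suppose the annihilator of the maximal ideal, {b ∈ B : b·x = 0 for all x ∈ m}, is a one-dimensional ℝ-subspace spanned by an element J. Let h ∈ B with h ≠ 0, and let c ∈ B be any element with c·h = J. Then the quotient algebra B' = B/Ann(h), where Ann(h) = {g ∈ B : g·h = 0}, is a local ℝ-algebra whose socle is one-dimensional: the annihilator of the maximal ideal of B' is the one-dimensional ℝ-subspace spanned by the class [c] of c, and [c] ≠ 0 in B'. (In other words, B/Ann(h) has a one-dimensional socle generated by the element J/h, which is well defined in the quotient.) -/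
/-!
Multiplication by `h` identifies `B ⧸ Ann h` with the ideal `B h`, and the maximal ideal of the
quotient is the image of that of `B`. Hence `[b]` lies in the socle of `B ⧸ Ann h` exactly when
`b * h` lies in the socle of `B`, i.e. when `b * h = r • J = (r • c) * h` for some `r`, which says
`[b] = r • [c]`.
-/

def Ann {B : Type*} [CommRing B] (h : B) : Ideal B where
  carrier := {g : B | g * h = 0}
  add_mem' := by
    intro a b ha hb
    simp only [Set.mem_setOf_eq] at *
    rw [add_mul, ha, hb, add_zero]
  zero_mem' := by simp
  smul_mem' := by
    intro c a ha
    simp only [Set.mem_setOf_eq, smul_eq_mul] at *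
    rw [mul_assoc, ha, mul_zero]

open IsLocalRing

def socle (R : Type*) [CommRing R] [IsLocalRing R] : Set R :=
  {b | ∀ x ∈ maximalIdeal R, b * x = 0}

section Ann

variable {R : Type*} [CommRing R] {h : R}

theorem mem_Ann {g : R} : g ∈ Ann h ↔ g * h = 0 := Iff.rfl

theorem Ann_ne_top (hh : h ≠ 0) : Ann h ≠ ⊤ :=
  (Ideal.ne_top_iff_one _).mpr (by simpa [mem_Ann] using hh)

theorem mk_Ann_eq_zero_iff {g : R} : Ideal.Quotient.mk (Ann h) g = 0 ↔ g * h = 0 :=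
  Ideal.Quotient.eq_zero_iff_mem

theorem mk_Ann_eq_smul_mk_iff {S : Type*} [CommSemiring S] [Algebra S R] (r : S) (b c : R) :
    Ideal.Quotient.mk (Ann h) b = r • Ideal.Quotient.mk (Ann h) c ↔ b * h = r • (c * h) := by
  rw [← Ideal.Quotient.mkₐ_eq_mk S, ← map_smul, Ideal.Quotient.mkₐ_eq_mk, Ideal.Quotient.eq,
    mem_Ann, sub_mul, sub_eq_zero, smul_mul_assoc]

end Ann

section LocalQuotient

variable {R : Type*} [CommRing R] [IsLocalRing R]

theorem isLocalRing_quotient {I : Ideal R} (hI : I ≠ ⊤) : IsLocalRing (R ⧸ I) :=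
  have := Ideal.Quotient.nontrivial_iff.mpr hI
  .of_surjective' _ Ideal.Quotient.mk_surjective

theorem mk_mem_maximalIdeal_quotient_iff {I : Ideal R} [IsLocalRing (R ⧸ I)] {x : R} :
    Ideal.Quotient.mk I x ∈ maximalIdeal (R ⧸ I) ↔ x ∈ maximalIdeal R := by
  have := IsLocalHom.of_surjective _ (Ideal.Quotient.mk_surjective (I := I))
  rw [← Ideal.mem_comap, maximalIdeal_comap]

theorem mk_mem_socle_quotient_Ann_iff {h : R} [IsLocalRing (R ⧸ Ann h)] {b : R} :
    Ideal.Quotient.mk (Ann h) b ∈ socle (R ⧸ Ann h) ↔ b * h ∈ socle R := by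
  simp only [socle, Set.mem_ofPred_eq, Ideal.Quotient.mk_surjective.forall,
    mk_mem_maximalIdeal_quotient_iff, ← map_mul, mk_Ann_eq_zero_iff, mul_right_comm b _ h]

end LocalQuotient

theorem quotient_by_annihilator_has_one_dimensional_socle_general
    {B : Type*} [CommRing B] [Algebra ℝ B] [IsLocalRing B]
    (J : B) (hJ : J ≠ 0)
    (hsoc : {b : B | ∀ x ∈ IsLocalRing.maximalIdeal B, b * x = 0} =
            {b : B | ∃ r : ℝ, b = r • J})
    (h : B) (hh : h ≠ 0) (c : B) (hc : c * h = J) :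
    ∃ inst : IsLocalRing (B ⧸ Ann h),
      Ideal.Quotient.mk (Ann h) c ≠ 0 ∧
      {b' : B ⧸ Ann h | ∀ x ∈ @IsLocalRing.maximalIdeal (B ⧸ Ann h) _ inst, b' * x = 0}
        = {b' : B ⧸ Ann h | ∃ r : ℝ, b' = r • Ideal.Quotient.mk (Ann h) c} := by
  have := isLocalRing_quotient (Ann_ne_top hh)
  refine ⟨‹_›, fun hc0 => hJ (hc ▸ mk_Ann_eq_zero_iff.mp hc0), ?_⟩
  ext b'
  obtain ⟨b, rfl⟩ := Ideal.Quotient.mk_surjective b'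
  change _ ∈ socle _ ↔ _
  rw [mk_mem_socle_quotient_Ann_iff, show socle B = _ from hsoc]
  simp only [Set.mem_ofPred_eq, mk_Ann_eq_smul_mk_iff, hc]

/-- Let `B` be a nonzero finite-dimensional commutative local `ℝ`-algebra whose
socle (the annihilator of the maximal ideal) is the one-dimensional subspace spanned by `J`.
Let `h ≠ 0` and let `c` satisfy `c * h = J`.  Then the quotient `B ⧸ Ann h` is a local
`ℝ`-algebra whose socle is the one-dimensional subspace spanned by the (nonzero) class of
`c`, i.e. of `J / h`. -/
theorem quotient_by_annihilator_has_one_dimensional_socle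
    {B : Type*} [CommRing B] [Algebra ℝ B] [IsLocalRing B] [FiniteDimensional ℝ B]
    (J : B) (hJ : J ≠ 0)
    (hsoc : {b : B | ∀ x ∈ IsLocalRing.maximalIdeal B, b * x = 0} =
            {b : B | ∃ r : ℝ, b = r • J})
    (h : B) (hh : h ≠ 0) (c : B) (hc : c * h = J) :
    ∃ inst : IsLocalRing (B ⧸ Ann h),
      Ideal.Quotient.mk (Ann h) c ≠ 0 ∧
      {b' : B ⧸ Ann h | ∀ x ∈ @IsLocalRing.maximalIdeal (B ⧸ Ann h) _ inst, b' * x = 0}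
        = {b' : B ⧸ Ann h | ∃ r : ℝ, b' = r • Ideal.Quotient.mk (Ann h) c} :=
  quotient_by_annihilator_has_one_dimensional_socle_general J hJ hsoc h hh c hc
end

section
/- Let V be a finite-dimensional real vector space and T : V × V → ℝ a symmetric bilinear form. Suppose there exists a linear automorphism σ of V with T(σ(x), σ(y)) = −T(x,y) for all x, y ∈ V. Then there exists a subspace W ⊆ V with 2·dim W ≥ dim V such that T(w,w') = 0 for all w, w' ∈ W. (Equivalently, a symmetric bilinear form admitting an anti-isometry has signature zero.) -/
/-!
The anti-isometry `σ` is an isometry from the quadratic form `Q x = T x x` to `-Q`, so by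
Sylvester's law of inertia `Q` has as many positive as negative squares. Diagonalise `Q` with
weights `1, 0, -1` and match the positive coordinates bijectively with the negative ones: the
equations `x i = x (e i)` cut out a subspace of codimension `sigPos Q ≤ dim V / 2` on which the
squares cancel in pairs, and by polarization `T` vanishes on it.
-/

open Module QuadraticMap

section WeightedSumSquares

variable {𝕜 ι : Type*} [Field 𝕜] [LinearOrder 𝕜] [IsStrictOrderedRing 𝕜] [Fintype ι]
  {w : ι → 𝕜}

theorem weightedSumSquares_eq_zero_of_pairing (hw : ∀ i, w i = -1 ∨ w i = 0 ∨ w i = 1)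
    (e : {i | 0 < w i} ≃ {i | w i < 0}) {x : ι → 𝕜} (hx : ∀ i : {i | 0 < w i}, x i = x (e i)) :
    weightedSumSquares 𝕜 w x = 0 := by
  classical
  have hsplit : ∀ i, w i • (x i * x i) =
      (if 0 < w i then x i * x i else 0) - (if w i < 0 then x i * x i else 0) := by
    intro i
    rcases hw i with h | h | h <;> norm_num [h]
  have hsubtype (p : ι → Prop) [DecidablePred p] :
      ∑ i, (if p i then x i * x i else 0) = ∑ i : {i // p i}, x i * x i := by
    rw [← Finset.sum_filter, Finset.sum_subtype (p := p) _ (by simp)]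
  rw [weightedSumSquares_apply, Fintype.sum_congr _ _ hsplit, Finset.sum_sub_distrib,
    hsubtype, hsubtype, sub_eq_zero]
  exact Fintype.sum_equiv e _ _ fun i => by rw [hx i]

theorem exists_isotropic_weightedSumSquares (hw : ∀ i, w i = -1 ∨ w i = 0 ∨ w i = 1)
    (e : {i | 0 < w i} ≃ {i | w i < 0}) :
    ∃ W : Submodule 𝕜 (ι → 𝕜), Nat.card ι ≤ finrank 𝕜 W + {i | 0 < w i}.ncard ∧
      ∀ x ∈ W, weightedSumSquares 𝕜 w x = 0 := by
  let pairing : (ι → 𝕜) →ₗ[𝕜] ({i | 0 < w i} → 𝕜) :=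
    LinearMap.pi fun i => LinearMap.proj (R := 𝕜) (φ := fun _ => 𝕜) i.1 - LinearMap.proj (e i).1
  refine ⟨LinearMap.ker pairing, ?_, fun x hx => weightedSumSquares_eq_zero_of_pairing hw e
    fun i => sub_eq_zero.mp (congrFun (LinearMap.mem_ker.mp hx) i)⟩
  have hrank := pairing.finrank_range_add_finrank_ker
  have hrange := pairing.range.finrank_le
  simp only [finrank_fintype_fun_eq_card, ← Nat.card_eq_fintype_card, Nat.card_coe_set_eq]
    at hrank hrange ⊢
  omega

end WeightedSumSquares

namespace QuadraticForm

variable {M : Type*} [AddCommGroup M] [Module ℝ M] [FiniteDimensional ℝ M]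

theorem exists_isotropic_of_sigPos_eq_sigNeg {Q : QuadraticForm ℝ M}
    (hQ : sigPos Q = sigNeg Q) :
    ∃ W : Submodule ℝ M, finrank ℝ M ≤ 2 * finrank ℝ W ∧ ∀ x ∈ W, Q x = 0 := by
  obtain ⟨w, hw, hQw⟩ := Q.equivalent_one_zero_neg_one_weighted_sum_squared
  have hpos := sigPos_of_equiv_weightedSumSquares hQw
  have hneg := sigNeg_of_equiv_weightedSumSquares hQw
  obtain ⟨e⟩ : Nonempty ({i | 0 < w i} ≃ {i | w i < 0}) := by
    rw [← Finite.card_eq, Nat.card_coe_set_eq, Nat.card_coe_set_eq, ← hpos, ← hneg, hQ]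
  obtain ⟨W, hW, hWiso⟩ := exists_isotropic_weightedSumSquares hw e
  obtain ⟨f⟩ := hQw
  refine ⟨W.map f.symm.toLinearMap, ?_, ?_⟩
  · have := sigPos_add_sigNeg_add_radical (Q := Q)
    rw [LinearEquiv.finrank_map_eq]
    simp only [Nat.card_eq_fintype_card, Fintype.card_fin] at hW
    omega
  · rintro _ ⟨x, hx, rfl⟩
    simpa using hWiso x hx

end QuadraticForm

theorem LinearMap.apply_eq_zero_of_forall_apply_self_eq_zero {R M : Type*} [CommRing R]
    [NoZeroDivisors R] [NeZero (2 : R)] [AddCommGroup M] [Module R M]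
    {T : M →ₗ[R] M →ₗ[R] R} (hT : ∀ x y, T x y = T y x) {W : Submodule R M}
    (hW : ∀ x ∈ W, T x x = 0) {x y : M} (hx : x ∈ W) (hy : y ∈ W) : T x y = 0 := by
  have hxy := hW (x + y) (W.add_mem hx hy)
  simp only [map_add, LinearMap.add_apply, hW x hx, hW y hy, hT y x, zero_add, add_zero,
    ← two_mul] at hxy
  exact (mul_eq_zero.mp hxy).resolve_left two_ne_zero

/-- A symmetric bilinear form on a finite-dimensional real vector space that
admits an anti-isometry (a linear automorphism `σ` with `T (σ x) (σ y) = - T x y`) has a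
totally isotropic subspace of at least half the dimension (hence signature zero). -/
theorem anti_isometry_gives_half_dimensional_isotropic
    {V : Type*} [AddCommGroup V] [Module ℝ V] [FiniteDimensional ℝ V]
    (T : V →ₗ[ℝ] V →ₗ[ℝ] ℝ) (hsymm : ∀ x y : V, T x y = T y x)
    (σ : V ≃ₗ[ℝ] V) (hσ : ∀ x y : V, T (σ x) (σ y) = - T x y) :
    ∃ W : Submodule ℝ V,
      Module.finrank ℝ V ≤ 2 * Module.finrank ℝ W ∧
      ∀ w ∈ W, ∀ w' ∈ W, T w w' = 0 := by
  let Q : QuadraticForm ℝ V := LinearMap.BilinMap.toQuadraticMap T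
  have hanti : Q.Equivalent (-Q) := ⟨{ σ with map_app' := fun x => by simp [Q, hσ] }⟩
  obtain ⟨W, hdim, hW⟩ :=
    QuadraticForm.exists_isotropic_of_sigPos_eq_sigNeg (hanti.sigPos_eq.trans sigPos_neg)
  exact ⟨W, hdim, fun w hw w' hw' =>
    LinearMap.apply_eq_zero_of_forall_apply_self_eq_zero hsymm hW hw hw'⟩
end

section
/- Let A be a finite-dimensional commutative ℝ-algebra with unit, L : A → ℝ an ℝ-linear map, f ∈ A, and m ≥ 1 an integer. Let K_m = Ann(f) ∩ (f^{m-1}) be the ideal of elements a ∈ A with a·f = 0 and a ∈ f^{m-1}·A. Then the prescription ⟨a,a'⟩_{f,m} = L(b·a'), where b ∈ A is any element with a = f^{m-1}·b, defines a well-defined symmetric bilinear form on K_m: for a, a' ∈ K_m the value L(b·a') does not depend on the choice of b with a = f^{m-1}·b, and L(b·a') = L(b'·a) whenever a = f^{m-1}·b and a' = f^{m-1}·b'. -/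
theorem mul_eq_mul_of_eq_common_mul {M : Type*} [CommSemigroup M] {c a a' b b' : M}
    (ha : a = c * b) (ha' : a' = c * b') : b * a' = a * b' := by
  rw [ha, ha', mul_left_comm, mul_assoc]

theorem flag_form_well_defined_and_symmetric_general
    {A : Type*} [CommRing A] [Algebra ℝ A]
    (L : A →ₗ[ℝ] ℝ) (f : A) (m : ℕ)
    (a a' : A)
    (ha'mem : ∃ b' : A, a' = f ^ (m - 1) * b') :
    (∀ b₁ b₂ : A, a = f ^ (m - 1) * b₁ → a = f ^ (m - 1) * b₂ →
      L (b₁ * a') = L (b₂ * a')) ∧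
    (∀ b b' : A, a = f ^ (m - 1) * b → a' = f ^ (m - 1) * b' →
      L (b * a') = L (b' * a)) := by
  constructor
  · rintro b₁ b₂ h₁ h₂
    obtain ⟨b', hb'⟩ := ha'mem
    rw [mul_eq_mul_of_eq_common_mul h₁ hb', mul_eq_mul_of_eq_common_mul h₂ hb']
  · rintro b b' hb hb'
    rw [mul_eq_mul_of_eq_common_mul hb hb', mul_comm]

/-- Let `A` be a finite-dimensional commutative `ℝ`-algebra, `L : A → ℝ`
`ℝ`-linear, `f ∈ A` and `m ≥ 1`.  On `K m = Ann f ∩ (f ^ (m - 1))`, the prescription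
`⟨a, a'⟩ = L (b * a')`, where `a = f ^ (m - 1) * b`, is well defined (independent of the
choice of `b`) and symmetric. -/
theorem flag_form_well_defined_and_symmetric
    {A : Type*} [CommRing A] [Algebra ℝ A] [FiniteDimensional ℝ A]
    (L : A →ₗ[ℝ] ℝ) (f : A) (m : ℕ) (hm : 1 ≤ m)
    (a a' : A) (ha : a * f = 0) (ha' : a' * f = 0)
    (hamem : ∃ b : A, a = f ^ (m - 1) * b) (ha'mem : ∃ b' : A, a' = f ^ (m - 1) * b') :
    (∀ b₁ b₂ : A, a = f ^ (m - 1) * b₁ → a = f ^ (m - 1) * b₂ →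
      L (b₁ * a') = L (b₂ * a')) ∧
    (∀ b b' : A, a = f ^ (m - 1) * b → a' = f ^ (m - 1) * b' →
      L (b * a') = L (b' * a)) :=
  flag_form_well_defined_and_symmetric_general L f m a a' ha'mem
end

section
/- Let A be a finite-dimensional commutative ℝ-algebra with unit, L : A → ℝ an ℝ-linear map, f ∈ A, and m ≥ 1 an integer. Let K_m = Ann(f) ∩ (f^{m-1}) and let ⟨a,a'⟩_{f,m} = L(b·a') for a = f^{m-1}·b be the associated symmetric bilinear form on K_m. Then K_{m+1} ⊆ K_m and the form ⟨ , ⟩_{f,m} vanishes on K_{m+1}: for every a ∈ K_{m+1} and every a' ∈ K_m one has ⟨a,a'⟩_{f,m} = 0. Consequently ⟨ , ⟩_{f,m} induces a well-defined symmetric bilinear form on the quotient K_m/K_{m+1}. -/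
/-- The flag of ideals `K m = Ann f ∩ (f ^ (m - 1))` (as a subset of `A`): elements
annihilating `f` that are divisible by `f ^ (m - 1)`. -/
def Kflag {A : Type*} [CommRing A] (f : A) (m : ℕ) : Set A :=
  {a : A | a * f = 0 ∧ ∃ b : A, a = f ^ (m - 1) * b}

theorem Kflag_antitone {A : Type*} [CommRing A] (f : A) : Antitone (Kflag f) :=
  fun _ _ hmm' _ ⟨haf, hdvd⟩ =>
    ⟨haf, (pow_dvd_pow f (Nat.sub_le_sub_right hmm' 1)).trans hdvd⟩

theorem mul_eq_zero_of_pow_mul_mem_Kflag {A : Type*} [CommRing A] {f a' b : A} {n : ℕ}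
    (hb : f ^ n * b ∈ Kflag f (n + 2)) (ha' : a' ∈ Kflag f (n + 1)) : b * a' = 0 := by
  obtain ⟨-, c, hc : f ^ n * b = f ^ (n + 1) * c⟩ := hb
  obtain ⟨ha'f, b', rfl⟩ := ha'
  change b * (f ^ n * b') = 0
  change f ^ n * b' * f = 0 at ha'f
  calc b * (f ^ n * b') = (f ^ n * b) * b' := by ring
    _ = c * (f ^ n * b' * f) := by rw [hc]; ring
    _ = 0 := by rw [ha'f, mul_zero]

theorem flag_form_vanishes_on_next_step_general
    {A : Type*} [CommRing A] [Algebra ℝ A]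
    (L : A →ₗ[ℝ] ℝ) (f : A) (m : ℕ) (hm : 1 ≤ m) :
    Kflag f (m + 1) ⊆ Kflag f m ∧
    (∀ a ∈ Kflag f (m + 1), ∀ a' ∈ Kflag f m,
      ∀ b : A, a = f ^ (m - 1) * b → L (b * a') = 0) := by
  obtain ⟨n, rfl⟩ := Nat.exists_eq_add_of_le' hm
  refine ⟨Kflag_antitone f (n + 1).le_succ, ?_⟩
  rintro _ ha a' ha' b rfl
  rw [mul_eq_zero_of_pow_mul_mem_Kflag ha ha', map_zero]

/-- With `K m = Ann f ∩ (f ^ (m - 1))` and the bilinear form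
`⟨a, a'⟩_{f,m} = L (b * a')` for `a = f ^ (m - 1) * b`, one has `K (m + 1) ⊆ K m` and the
form `⟨ , ⟩_{f,m}` vanishes whenever its first argument lies in `K (m + 1)`; consequently it
induces a well-defined symmetric bilinear form on the quotient `K m / K (m + 1)`. -/
theorem flag_form_vanishes_on_next_step
    {A : Type*} [CommRing A] [Algebra ℝ A] [FiniteDimensional ℝ A]
    (L : A →ₗ[ℝ] ℝ) (f : A) (m : ℕ) (hm : 1 ≤ m) :
    Kflag f (m + 1) ⊆ Kflag f m ∧
    (∀ a ∈ Kflag f (m + 1), ∀ a' ∈ Kflag f m,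
      ∀ b : A, a = f ^ (m - 1) * b → L (b * a') = 0) :=
  flag_form_vanishes_on_next_step_general L f m hm
end
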